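/- Let R be a graded-commutative Z/2-algebra and φ : R → R a ring homomorphism with φ(x) ∈ {c, c + x} for degree-1 elements x, c of R satisfying x² = 0 and c² ≠ 0, where in the case φ(x) = c + x one additionally assumes φ(c) = c and the characteristic is 2, so that φ(x)² = c². Then φ(x²) = 0 forces c² = 0, a contradiction; hence any ring endomorphism of A = (Z/2)[x,c,d]/⟨x², c^(m+1) + c^m x, d^(n+1)⟩ (m ≥ 1) permuting the degree-1 space and preserving the relations must fix x. -/

import Mathlib

/-!
A ring endomorphism preserves the relation `x² = 0`, so `φ(x)² = 0`. Neither `c` nor `c + x`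
squares to zero: in characteristic 2 with `x² = 0` one has `(c + x)² = c²`, and in
`H^*(Q(m,n); ℤ/2)` the class `c²` survives for `m ≥ 1`, because every element of the defining
ideal has equal coefficients at `c²` and at `cx` while `c²` itself does not.
-/

open MvPolynomial

/-- The mod 2 cohomology ring of the Wall manifold `Q(m,n)`:
`(ℤ/2)[x,c,d]/⟨x², c^(m+1) + c^m x, d^(n+1)⟩`, where
`x = X 0`, `c = X 1`, `d = X 2`. -/
noncomputable abbrev WallCohomology (m n : ℕ) : Type :=
  MvPolynomial (Fin 3) (ZMod 2) ⧸
    (Ideal.span {(X 0 : MvPolynomial (Fin 3) (ZMod 2)) ^ 2,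
      (X 1) ^ (m + 1) + (X 1) ^ m * (X 0), (X 2) ^ (n + 1)})

noncomputable def Wx (m n : ℕ) : WallCohomology m n := Ideal.Quotient.mk _ (X 0)
noncomputable def Wc (m n : ℕ) : WallCohomology m n := Ideal.Quotient.mk _ (X 1)
noncomputable def Wd (m n : ℕ) : WallCohomology m n := Ideal.Quotient.mk _ (X 2)

theorem two_eq_zero_of_zmod_two_algebra (R : Type*) [Semiring R] [Algebra (ZMod 2) R] :
    (2 : R) = 0 := by
  rw [← map_ofNat (algebraMap (ZMod 2) R) 2, show (OfNat.ofNat 2 : ZMod 2) = 0 from rfl,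
    map_zero]

theorem add_sq_eq_sq_of_sq_eq_zero {R : Type*} [CommSemiring R] (h2 : (2 : R) = 0) {a b : R}
    (hb : b ^ 2 = 0) : (a + b) ^ 2 = a ^ 2 := by
  rw [add_sq, hb, h2]
  ring

theorem map_ne_of_sq_eq_zero {M N F : Type*} [MonoidWithZero M] [MonoidWithZero N]
    [FunLike F M N] [MonoidWithZeroHomClass F M N] (f : F) {x : M} {y : N}
    (hx : x ^ 2 = 0) (hy : y ^ 2 ≠ 0) : f x ≠ y := by
  rintro rfl
  exact hy (by rw [← map_pow, hx, map_zero])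

namespace WallCohomology

open Finsupp

theorem coeff_c_sq_add_coeff_cx_eq_zero_of_mem {m n : ℕ} (hm : 1 ≤ m)
    {f : MvPolynomial (Fin 3) (ZMod 2)}
    (hf : f ∈ Ideal.span {(X 0 : MvPolynomial (Fin 3) (ZMod 2)) ^ 2,
      (X 1) ^ (m + 1) + (X 1) ^ m * (X 0), (X 2) ^ (n + 1)}) :
    coeff (single 1 1 + single 1 1) f + coeff (single 1 1 + single 0 1) f = 0 := by
  obtain ⟨k, rfl⟩ := Nat.exists_eq_add_of_le' hm
  obtain ⟨p, _, hg, rfl⟩ := Ideal.mem_span_insert.mp hf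
  obtain ⟨q, _, hr, rfl⟩ := Ideal.mem_span_insert.mp hg
  obtain ⟨r, rfl⟩ := Ideal.mem_span_singleton'.mp hr
  -- Multiples of `x²` and `d^(n+1)` contribute to neither coefficient; both coefficients of
  -- `q (c^(k+2) + c^(k+1) x)` equal the constant coefficient of `q c^k`.
  simp [pow_succ, ← mul_assoc, mul_add, coeff_mul_X', CharTwo.add_self_eq_zero]

theorem x_sq (m n : ℕ) : Wx m n ^ 2 = 0 := by
  rw [Wx, ← map_pow, Ideal.Quotient.eq_zero_iff_mem]
  exact Ideal.subset_span (by simp)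

theorem c_sq_ne_zero {m : ℕ} (n : ℕ) (hm : 1 ≤ m) : Wc m n ^ 2 ≠ 0 := by
  rw [Wc, ← map_pow, Ne, Ideal.Quotient.eq_zero_iff_mem]
  intro h
  have := coeff_c_sq_add_coeff_cx_eq_zero_of_mem hm h
  simp [pow_succ, coeff_mul_X'] at this

end WallCohomology

/-- General principle: in a commutative `ℤ/2`-algebra with elements `x, c`
satisfying `x² = 0` and `c² ≠ 0`, a ring endomorphism cannot send `x` to `c`,
nor (if it fixes `c`) to `c + x`.  Hence a ring endomorphism of
`H^*(Q(m,n); ℤ/2)` (`m ≥ 1`) whose value at `x` lies in the degree-1 span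
`{x, c, c + x}` must fix `x`. -/
theorem stmt11 :
    (∀ (R : Type) [CommRing R] [Algebra (ZMod 2) R] (x c : R),
      x ^ 2 = 0 → c ^ 2 ≠ 0 → ∀ φ : R →+* R,
        φ x ≠ c ∧ (φ c = c → φ x ≠ c + x)) ∧
    (∀ m n : ℕ, 1 ≤ m →
      (Wc m n) ^ 2 ≠ 0 ∧ (Wc m n + Wx m n) ^ 2 = (Wc m n) ^ 2 ∧
      ∀ φ : WallCohomology m n →+* WallCohomology m n,
        (φ (Wx m n) = Wx m n ∨ φ (Wx m n) = Wc m n ∨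
          φ (Wx m n) = Wc m n + Wx m n) →
        φ (Wx m n) = Wx m n) := by
  refine ⟨fun R _ _ x c hx hc φ => ⟨map_ne_of_sq_eq_zero φ hx hc, fun _ => ?_⟩,
    fun m n hm => ?_⟩
  · refine map_ne_of_sq_eq_zero φ hx ?_
    rwa [add_sq_eq_sq_of_sq_eq_zero (two_eq_zero_of_zmod_two_algebra R) hx]
  · have hc := WallCohomology.c_sq_ne_zero n hm
    have hcx : (Wc m n + Wx m n) ^ 2 = Wc m n ^ 2 :=
      add_sq_eq_sq_of_sq_eq_zero (two_eq_zero_of_zmod_two_algebra _) (WallCohomology.x_sq m n)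
    refine ⟨hc, hcx, fun φ hφ => ?_⟩
    rcases hφ with h | h | h
    · exact h
    · exact absurd h (map_ne_of_sq_eq_zero φ (WallCohomology.x_sq m n) hc)
    · exact absurd h (map_ne_of_sq_eq_zero φ (WallCohomology.x_sq m n) (hcx ▸ hc))
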